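/- For a partition π and positive integer n, one has |π| ≥ n if and only if every partition σ satisfying the following condition has at least n parts: for all r and m, if m[r] ≤ π and (m+1)[r] ≰ π and [r] ≤ π, then σ has at least m parts of size exactly r. -/

import Mathlib

/-- A partition: a weakly decreasing sequence of naturals with finite support. -/
structure YPart where
  f : ℕ → ℕ
  mono : ∀ i j : ℕ, i ≤ j → f j ≤ f i
  fin : ∃ N : ℕ, ∀ i : ℕ, N ≤ i → f i = 0

namespace YPart

theorem ext' {σ π : YPart} (h : σ.f = π.f) : σ = π := by
  cases σ; cases π; cases h; rfl

/-- The Young order: containment of diagrams, i.e. pointwise comparison. -/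
instance : PartialOrder YPart where
  le σ π := ∀ i, σ.f i ≤ π.f i
  le_refl σ i := le_refl _
  le_trans a b c hab hbc i := (hab i).trans (hbc i)
  le_antisymm a b hab hba := ext' (funext fun i => le_antisymm (hab i) (hba i))

noncomputable def card (π : YPart) : ℕ := ∑' i, π.f i

noncomputable def length (π : YPart) : ℕ := Nat.card {i : ℕ | 0 < π.f i}

noncomputable def mult (π : YPart) (r : ℕ) : ℕ := Nat.card {i : ℕ | π.f i = r}

/-- The rectangular partition `m[n]`: `m` parts of size `n`. -/
def rect (m n : ℕ) : YPart where
  f i := if i < m then n else 0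
  mono := by intro i j hij; (try dsimp only); split_ifs <;> omega
  fin := ⟨m, fun i hi => by (try dsimp only); split_ifs <;> omega⟩

/-- The staircase (factorial) partition `[n]! = (n, n-1, …, 1)`. -/
def stair (n : ℕ) : YPart where
  f i := n - i
  mono := by intro i j hij; (try dsimp only); omega
  fin := ⟨n, fun i hi => by (try dsimp only); omega⟩

def yempty : YPart := rect 0 0

def Rectangular (π : YPart) : Prop := ∃ m n : ℕ, π = rect m n

end YPart

/-! Let `colLen π c` be the number of parts of `π` exceeding `c`, i.e. the length of column `c`
of the diagram. The hypothesis on `σ` says exactly that `σ` has at least `colLen π c` parts equal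
to `c + 1` for each `c < π.f 0`, so `length σ ≥ ∑ c, colLen π c = |π|`. Conversely, the partition
with exactly `colLen π c` parts equal to `c + 1` satisfies the hypothesis and has `|π|` parts; it is
built from its column lengths `c ↦ ∑_{t ≥ c} colLen π t`. -/

namespace YPart

open Finset

section ColLen

variable (π : YPart)

noncomputable def colLen (c : ℕ) : ℕ := Nat.card {i : ℕ | c < π.f i}

theorem colLen_zero : colLen π 0 = length π := rfl

variable {π}

theorem colLen_eq_of_forall {c k : ℕ} (h : ∀ i, c < π.f i ↔ i < k) : colLen π c = k := by
  rw [colLen, Nat.card_coe_set_eq, show {i | c < π.f i} = Set.Iio k from Set.ext h,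
    Set.ncard_Iio_nat]

theorem lt_colLen_iff {c i : ℕ} : i < colLen π c ↔ c < π.f i := by
  obtain ⟨N, hN⟩ := π.fin
  have hex : ∃ i, π.f i ≤ c := ⟨N, (hN N le_rfl).trans_le c.zero_le⟩
  have hfind : ∀ i, c < π.f i ↔ i < Nat.find hex := fun i => by
    rw [Nat.lt_find_iff]
    exact ⟨fun hi m hm => not_le.2 (hi.trans_le (π.mono m i hm)), fun h => not_le.1 (h i le_rfl)⟩
  rw [colLen_eq_of_forall hfind, hfind]

theorem colLen_antitone : Antitone (colLen π) := fun c d hcd => by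
  by_contra! h
  have hd := lt_colLen_iff.1 h
  have hc : ¬ c < π.f (colLen π c) := fun h' => (lt_colLen_iff.2 h').false
  omega

theorem mult_succ_add_colLen_succ (c : ℕ) : mult π (c + 1) + colLen π (c + 1) = colLen π c := by
  have hset : {i | π.f i = c + 1} = Set.Ico (colLen π (c + 1)) (colLen π c) := by
    ext i
    simp only [Set.mem_ofPred_eq, Set.mem_Ico, lt_colLen_iff, ← not_lt (b := colLen π (c + 1))]
    omega
  rw [mult, Nat.card_coe_set_eq, hset, Set.ncard_Ico_nat]
  have := colLen_antitone (π := π) (Nat.le_add_right c 1)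
  omega

theorem sum_range_mult_succ_add_colLen (k : ℕ) :
    ∑ c ∈ range k, mult π (c + 1) + colLen π k = length π := by
  induction k with
  | zero => simp [colLen_zero]
  | succ k ih => rw [sum_range_succ, add_assoc, mult_succ_add_colLen_succ, ih]

theorem card_eq_sum_colLen : card π = ∑ c ∈ range (π.f 0), colLen π c := by
  have hrow : ∀ i, {c ∈ range (π.f 0) | c < π.f i} = range (π.f i) := fun i => by
    ext c
    simp only [mem_filter, mem_range]
    have := π.mono 0 i i.zero_le
    omega
  have hcol : ∀ c, {i ∈ range (length π) | c < π.f i} = range (colLen π c) := fun c => by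
    ext i
    simp only [mem_filter, mem_range, ← lt_colLen_iff, ← colLen_zero]
    have := colLen_antitone (π := π) c.zero_le
    omega
  calc card π = ∑ i ∈ range (length π), π.f i :=
        tsum_eq_sum fun i hi => by simpa [← colLen_zero, lt_colLen_iff] using hi
    _ = ∑ i ∈ range (length π), #((range (π.f 0)).bipartiteAbove (fun i c => c < π.f i) i) := by
        simp only [bipartiteAbove, hrow, card_range]
    _ = ∑ c ∈ range (π.f 0), #((range (length π)).bipartiteBelow (fun i c => c < π.f i) c) :=
        sum_card_bipartiteAbove_eq_sum_card_bipartiteBelow _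
    _ = ∑ c ∈ range (π.f 0), colLen π c := by
        simp only [bipartiteBelow, hcol, card_range]

theorem rect_le_iff {s r : ℕ} : rect s r ≤ π ↔ ∀ i < s, r ≤ π.f i := by
  refine forall_congr' fun i => ?_
  by_cases hi : i < s <;> simp [rect, hi]

theorem rect_succ_le_iff {s c : ℕ} : rect s (c + 1) ≤ π ↔ s ≤ colLen π c := by
  simp only [rect_le_iff, Nat.succ_le_iff, ← lt_colLen_iff]
  exact ⟨fun h => not_lt.1 fun hs => (h _ hs).false, fun h i hi => hi.trans_le h⟩

end ColLen

section OfColLens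

variable {d : ℕ → ℕ} (hd : Antitone d) (K : ℕ)

def ofColLens : YPart where
  f j := #{c ∈ range K | j < d c}
  mono i j hij := card_le_card fun c => by
    simp only [mem_filter]
    exact fun h => ⟨h.1, hij.trans_lt h.2⟩
  fin := ⟨d 0, fun j hj => card_eq_zero.2 <|
    filter_eq_empty_iff.2 fun c _ => not_lt.2 ((hd c.zero_le).trans hj)⟩

variable {K}

theorem lt_ofColLens_iff (hK : ∀ c, K ≤ c → d c = 0) {c j : ℕ} :
    c < (ofColLens hd K).f j ↔ j < d c := by
  constructor
  · intro h
    by_contra! hj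
    have hsub : {t ∈ range K | j < d t} ⊆ range c := fun t ht => by
      simp only [mem_filter, mem_range] at ht ⊢
      by_contra! htc
      exact ((hd htc).trans hj).not_gt ht.2
    exact ((card_le_card hsub).trans_eq (card_range c)).not_gt h
  · intro hj
    have hcK : c < K := by
      by_contra! h
      simp [hK c h] at hj
    have hsub : range (c + 1) ⊆ {t ∈ range K | j < d t} := fun t ht => by
      simp only [mem_filter, mem_range] at ht ⊢
      exact ⟨by omega, hj.trans_le (hd (by omega))⟩
    exact (card_range (c + 1)).symm.trans_le (card_le_card hsub)

theorem colLen_ofColLens (hK : ∀ c, K ≤ c → d c = 0) (c : ℕ) : colLen (ofColLens hd K) c = d c :=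
  colLen_eq_of_forall fun _ => lt_ofColLens_iff hd hK

end OfColLens

theorem exists_mult_succ_eq_colLen_and_length_eq_card (π : YPart) :
    ∃ σ : YPart, (∀ c < π.f 0, mult σ (c + 1) = colLen π c) ∧ length σ = card π := by
  set d : ℕ → ℕ := fun c => ∑ t ∈ Ico c (π.f 0), colLen π t
  have hd : Antitone d := fun a b hab => sum_le_sum_of_subset (Ico_subset_Ico_left hab)
  have hK : ∀ c, π.f 0 ≤ c → d c = 0 := fun c hc => by simp [d, hc]
  refine ⟨ofColLens hd (π.f 0), fun c hc => ?_, ?_⟩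
  · have hσ := mult_succ_add_colLen_succ (π := ofColLens hd (π.f 0)) c
    have hsplit : d c = colLen π c + d (c + 1) := sum_eq_sum_Ico_succ_bot hc _
    rw [colLen_ofColLens hd hK, colLen_ofColLens hd hK] at hσ
    omega
  · rw [← colLen_zero, colLen_ofColLens hd hK, card_eq_sum_colLen, range_eq_Ico]

theorem forall_rect_le_imp_iff {π : YPart} {m : ℕ → ℕ} :
    (∀ r s : ℕ, rect s r ≤ π → ¬ rect (s + 1) r ≤ π → rect 1 r ≤ π → s ≤ m r) ↔
      ∀ c < π.f 0, colLen π c ≤ m (c + 1) := by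
  have hpos : ∀ {c}, rect 1 (c + 1) ≤ π ↔ c < π.f 0 := by
    simp [rect_succ_le_iff, Nat.one_le_iff_ne_zero, ← Nat.pos_iff_ne_zero, lt_colLen_iff]
  constructor
  · intro h c hc
    exact h (c + 1) _ (rect_succ_le_iff.2 le_rfl) (by simp [rect_succ_le_iff]) (hpos.2 hc)
  · intro h r s hs hs' h1
    obtain ⟨c, rfl⟩ : ∃ c, r = c + 1 := Nat.exists_eq_add_one.2 <| Nat.pos_of_ne_zero
      fun hr => hs' (rect_le_iff.2 fun _ _ => hr ▸ Nat.zero_le _)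
    exact (rect_succ_le_iff.1 hs).trans (h c (hpos.1 h1))

end YPart

open YPart in
theorem card_ge_iff_general (π : YPart) (n : ℕ) :
    n ≤ card π ↔
      ∀ σ : YPart,
        (∀ r s : ℕ, rect s r ≤ π → ¬ rect (s + 1) r ≤ π → rect 1 r ≤ π →
          s ≤ mult σ r) →
        n ≤ length σ := by
  simp only [forall_rect_le_imp_iff]
  constructor
  · intro h σ hσ
    calc n ≤ card π := h
      _ = ∑ c ∈ Finset.range (π.f 0), colLen π c := card_eq_sum_colLen
      _ ≤ ∑ c ∈ Finset.range (π.f 0), mult σ (c + 1) :=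
        Finset.sum_le_sum fun c hc => hσ c (Finset.mem_range.1 hc)
      _ ≤ length σ := Nat.le.intro (sum_range_mult_succ_add_colLen _)
  · intro h
    obtain ⟨σ, hmult, hlen⟩ := exists_mult_succ_eq_colLen_and_length_eq_card π
    exact hlen ▸ h σ fun c hc => (hmult c hc).ge

open YPart in
/-- `|π| ≥ n` iff every partition σ satisfying the condition (**) has at least
`n` parts, where (**): for all `r, m`, if `m[r] ≤ π`, `(m+1)[r] ≰ π` and
`[r] ≤ π`, then σ has at least `m` parts of size exactly `r`. -/
theorem card_ge_iff (π : YPart) (n : ℕ) (hn : 0 < n) :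
    n ≤ card π ↔
      ∀ σ : YPart,
        (∀ r s : ℕ, rect s r ≤ π → ¬ rect (s + 1) r ≤ π → rect 1 r ≤ π →
          s ≤ mult σ r) →
        n ≤ length σ :=
  card_ge_iff_general π n
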